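/- Let μ be the fair-coin product probability measure on Cantor space 2^ω = ℕ → Bool, and let A ⊆ 2^ω be invariant under finite modifications, i.e., whenever x ∈ A and y ∈ 2^ω agrees with x at all but finitely many coordinates, then y ∈ A. Then the outer measure of A satisfies μ*(A) = 0 or μ*(A) = 1. -/

import Mathlib

open MeasureTheory ENNReal

/-- The basic clopen set `[η]` of all `x ∈ 2^ω` extending the finite binary string `η`. -/
def cylinder (η : List Bool) : Set (ℕ → Bool) :=
  {x | ∀ i : Fin η.length, x i = η.get i}

/-!
Flipping finitely many coordinates preserves `μ` (it permutes the cylinders of each length) and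
preserves `A`. Flipping the coordinate `|l|` swaps the two halves `[l ++ [false]]`, `[l ++ [true]]`
of a cylinder, so `A` meets them in equal outer measure; since the outer measure is additive on a
split by a measurable set, `μ (A ∩ [η]) = μ A * μ [η]` by induction on `η`. Hence the restriction
of `μ` to a measurable hull `B` of `A` agrees with `μ A • μ` on the π-system of cylinders, so the
two measures coincide, and evaluating at `B` gives `μ A = μ A * μ A`.
-/

namespace CantorSpace

theorem mem_cylinder_iff {η : List Bool} {x : ℕ → Bool} :
    x ∈ cylinder η ↔ ∀ i (hi : i < η.length), x i = η[i] :=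
  ⟨fun hx i hi => hx ⟨i, hi⟩, fun hx i => hx i i.isLt⟩

theorem cylinder_nil : cylinder [] = Set.univ := by
  ext x; simp [mem_cylinder_iff]

theorem cylinder_append_singleton (l : List Bool) (b : Bool) :
    cylinder (l ++ [b]) = cylinder l ∩ {x | x l.length = b} := by
  ext x
  simp only [Set.mem_inter_iff, mem_cylinder_iff, List.length_append, List.length_singleton,
    Set.mem_ofPred_eq]
  constructor
  · intro h
    refine ⟨fun i hi => ?_, by simpa using h l.length (by omega)⟩
    simpa [List.getElem_append_left hi] using h i (by omega)
  · rintro ⟨hl, hb⟩ i hi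
    rcases Nat.lt_succ_iff_lt_or_eq.mp hi with h | rfl
    · simpa [List.getElem_append_left h] using hl i h
    · simpa using hb

theorem measurableSet_cylinder (η : List Bool) : MeasurableSet (cylinder η) := by
  have : cylinder η = ⋂ i : Fin η.length, {x : ℕ → Bool | x i = η.get i} :=
    Set.ext fun _ => by rw [Set.mem_iInter]; rfl
  rw [this]
  exact .iInter fun i => measurableSet_eq_fun (measurable_pi_apply _) measurable_const

theorem setOf_apply_eq_iUnion_cylinder (n : ℕ) (b : Bool) :
    {x : ℕ → Bool | x n = b} = ⋃ v : Fin n → Bool, cylinder (List.ofFn v ++ [b]) := by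
  ext x
  simp only [Set.mem_iUnion, cylinder_append_singleton, Set.mem_inter_iff, List.length_ofFn,
    Set.mem_ofPred_eq]
  exact ⟨fun hx => ⟨fun i => x i, by simp [mem_cylinder_iff], hx⟩, fun ⟨_, _, hx⟩ => hx⟩

theorem generateFrom_range_cylinder :
    MeasurableSpace.generateFrom (Set.range cylinder) = MeasurableSpace.pi := by
  refine le_antisymm (MeasurableSpace.generateFrom_le ?_) ?_
  · rintro _ ⟨η, rfl⟩
    exact measurableSet_cylinder η
  · rw [MeasurableSpace.pi_eq_generateFrom_projections]
    refine MeasurableSpace.generateFrom_le ?_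
    rintro _ ⟨n, s, -, rfl⟩
    have : Function.eval n ⁻¹' s = ⋃ b ∈ s, {x : ℕ → Bool | x n = b} := by ext; simp
    rw [this]
    refine .biUnion s.to_countable fun b _ => ?_
    rw [setOf_apply_eq_iUnion_cylinder]
    exact .iUnion fun v => MeasurableSpace.measurableSet_generateFrom ⟨_, rfl⟩

theorem cylinder_subset_of_length_le {η η' : List Bool} (hle : η.length ≤ η'.length)
    (hne : (cylinder η ∩ cylinder η').Nonempty) : cylinder η' ⊆ cylinder η := by
  obtain ⟨x, hx, hx'⟩ := hne
  intro y hy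
  rw [mem_cylinder_iff] at hx hx' hy ⊢
  intro i hi
  rw [hy i (hi.trans_le hle), ← hx' i (hi.trans_le hle), hx i hi]

theorem isPiSystem_range_cylinder : IsPiSystem (Set.range cylinder) := by
  rintro _ ⟨η, rfl⟩ _ ⟨η', rfl⟩ hne
  rcases le_total η.length η'.length with h | h
  · exact ⟨η', (Set.inter_eq_right.mpr (cylinder_subset_of_length_le h hne)).symm⟩
  · rw [Set.inter_comm] at hne ⊢
    exact ⟨η, (Set.inter_eq_right.mpr (cylinder_subset_of_length_le h hne)).symm⟩

theorem ext_of_cylinder {μ ν : Measure (ℕ → Bool)} [IsFiniteMeasure μ]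
    (h : ∀ η, μ (cylinder η) = ν (cylinder η)) : μ = ν :=
  ext_of_generate_finite _ generateFrom_range_cylinder.symm isPiSystem_range_cylinder
    (by rintro _ ⟨η, rfl⟩; exact h η) (by rw [← cylinder_nil]; exact h [])

def xorMask (m : ℕ → Bool) : (ℕ → Bool) ≃ᵐ (ℕ → Bool) where
  toFun x n := xor (m n) (x n)
  invFun x n := xor (m n) (x n)
  left_inv x := by funext n; simp
  right_inv x := by funext n; simp
  measurable_toFun := by change Measurable fun (x : ℕ → Bool) n => xor (m n) (x n); fun_prop
  measurable_invFun := by change Measurable fun (x : ℕ → Bool) n => xor (m n) (x n); fun_prop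

theorem xorMask_apply (m x : ℕ → Bool) (n : ℕ) : xorMask m x n = xor (m n) (x n) := rfl

theorem xorMask_xorMask (m x : ℕ → Bool) : xorMask m (xorMask m x) = x :=
  (xorMask m).symm_apply_apply x

theorem preimage_xorMask_cylinder (m : ℕ → Bool) (η : List Bool) :
    xorMask m ⁻¹' cylinder η = cylinder (List.ofFn fun i : Fin η.length => xor (m i) η[i]) := by
  ext x
  simp only [Set.mem_preimage, mem_cylinder_iff, xorMask_apply, List.length_ofFn,
    List.getElem_ofFn]
  exact forall₂_congr fun i _ => by cases m i <;> simp [Bool.not_eq_eq_eq_not]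

theorem setOf_ne_xorMask (m x : ℕ → Bool) : {n | x n ≠ xorMask m x n} = {n | m n = true} := by
  ext n
  simp only [Set.mem_ofPred_eq, xorMask_apply]
  cases m n <;> simp

theorem preimage_xorMask_single_cylinder_append (l : List Bool) (b : Bool) :
    xorMask (fun k => decide (k = l.length)) ⁻¹' cylinder (l ++ [b]) = cylinder (l ++ [!b]) := by
  ext x
  simp only [Set.mem_preimage, cylinder_append_singleton, Set.mem_inter_iff, mem_cylinder_iff,
    Set.mem_ofPred_eq, xorMask_apply]
  refine and_congr (forall₂_congr fun i hi => by simp [hi.ne]) ?_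
  cases b <;> simp

theorem measure_inter_cylinder_append_false_add_true (μ : Measure (ℕ → Bool))
    (A : Set (ℕ → Bool)) (l : List Bool) :
    μ (A ∩ cylinder (l ++ [false])) + μ (A ∩ cylinder (l ++ [true])) = μ (A ∩ cylinder l) := by
  have hcompl : {x : ℕ → Bool | x l.length = true} = {x | x l.length = false}ᶜ := by
    ext; simp
  rw [cylinder_append_singleton, cylinder_append_singleton, ← Set.inter_assoc, ← Set.inter_assoc,
    hcompl, ← Set.sdiff_eq]
  exact measure_inter_add_sdiff _ (measurableSet_eq_fun (measurable_pi_apply _) measurable_const)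

section FairCoin

variable {μ : Measure (ℕ → Bool)} [IsFiniteMeasure μ]
  (hμ : ∀ η : List Bool, μ (cylinder η) = ((2 : ℝ≥0∞) ^ η.length)⁻¹)
include hμ

theorem measurePreserving_xorMask (m : ℕ → Bool) : MeasurePreserving (xorMask m) μ μ :=
  ⟨(xorMask m).measurable, ext_of_cylinder fun η => by
    rw [MeasurableEquiv.map_apply, preimage_xorMask_cylinder, hμ, hμ, List.length_ofFn]⟩

variable {A : Set (ℕ → Bool)} (hA : ∀ x ∈ A, ∀ y : ℕ → Bool, {n : ℕ | x n ≠ y n}.Finite → y ∈ A)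
include hA

omit hμ in
theorem preimage_xorMask_eq_self {m : ℕ → Bool} (hm : {n | m n = true}.Finite) :
    xorMask m ⁻¹' A = A := by
  have mem : ∀ x ∈ A, xorMask m x ∈ A := fun x hx => hA x hx _ (by rwa [setOf_ne_xorMask])
  ext x
  exact ⟨fun hx => by simpa [xorMask_xorMask] using mem _ hx, mem x⟩

theorem measure_inter_cylinder_append_not (l : List Bool) (b : Bool) :
    μ (A ∩ cylinder (l ++ [!b])) = μ (A ∩ cylinder (l ++ [b])) := by
  have hfin : {n | decide (n = l.length) = true}.Finite := by simp
  rw [← (measurePreserving_xorMask hμ _).measure_preimage_equiv, Set.preimage_inter,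
    preimage_xorMask_eq_self hA hfin, preimage_xorMask_single_cylinder_append, Bool.not_not]

theorem two_mul_measure_inter_cylinder_append (l : List Bool) (b : Bool) :
    2 * μ (A ∩ cylinder (l ++ [b])) = μ (A ∩ cylinder l) := by
  rw [← measure_inter_cylinder_append_false_add_true μ A l, two_mul]
  cases b
  · rw [← measure_inter_cylinder_append_not hμ hA l false, Bool.not_false]
  · rw [← measure_inter_cylinder_append_not hμ hA l true, Bool.not_true]

theorem measure_inter_cylinder (η : List Bool) : μ (A ∩ cylinder η) = μ A * μ (cylinder η) := by
  induction η using List.reverseRecOn with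
  | nil => rw [hμ, cylinder_nil, Set.inter_univ]; simp
  | append_singleton l b ih =>
    have hA_half := two_mul_measure_inter_cylinder_append hμ hA l b
    have huniv_half := two_mul_measure_inter_cylinder_append hμ (A := Set.univ)
      (fun _ _ _ _ => trivial) l b
    rw [Set.univ_inter, Set.univ_inter] at huniv_half
    rw [ih, ← huniv_half, mul_left_comm] at hA_half
    exact (ENNReal.mul_right_inj two_ne_zero ofNat_ne_top).mp hA_half

theorem restrict_toMeasurable_eq_smul : μ.restrict (toMeasurable μ A) = μ A • μ :=
  ext_of_cylinder fun η => by
    rw [Measure.restrict_apply (measurableSet_cylinder η), Set.inter_comm,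
      Measure.measure_toMeasurable_inter_of_sFinite (measurableSet_cylinder η),
      measure_inter_cylinder hμ hA, Measure.smul_apply, smul_eq_mul]

end FairCoin

end CantorSpace

theorem ENNReal.eq_zero_or_one_of_mul_self_eq {t : ℝ≥0∞} (ht : t ≠ ∞) (h : t * t = t) :
    t = 0 ∨ t = 1 := by
  rcases eq_or_ne t 0 with h0 | h0
  · exact .inl h0
  · exact .inr ((ENNReal.mul_right_inj h0 ht).mp (by rw [mul_one, h]))

open CantorSpace in
/-- Zero-one law for outer measure: if `μ` is the fair-coin product measure on Cantor
space (characterized by its values `2^{-|η|}` on basic clopen sets) and `A ⊆ 2^ω` is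
invariant under finite modifications, then `μ*(A) = 0` or `μ*(A) = 1`. -/
theorem stmt11 (μ : Measure (ℕ → Bool)) [IsProbabilityMeasure μ]
    (hμ : ∀ η : List Bool, μ (cylinder η) = ((2 : ℝ≥0∞) ^ η.length)⁻¹)
    (A : Set (ℕ → Bool))
    (hinv : ∀ x ∈ A, ∀ y : ℕ → Bool, {n : ℕ | x n ≠ y n}.Finite → y ∈ A) :
    μ A = 0 ∨ μ A = 1 := by
  have h := congrArg (· (toMeasurable μ A)) (restrict_toMeasurable_eq_smul hμ hinv)
  simp only [Measure.restrict_apply (measurableSet_toMeasurable μ A), Set.inter_self,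
    measure_toMeasurable, Measure.smul_apply, smul_eq_mul] at h
  exact ENNReal.eq_zero_or_one_of_mul_self_eq (measure_ne_top μ A) h.symm
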